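/- For η > 1/2 and any decreasing loss ℓ bounded below with m = inf_α C_η(α), if there exists α₀ > 0 with ℓ(α₀) < ℓ(0), then inf { C_η(α) : α ≤ −α₀ } ≥ (2η − 1)(ℓ(0) − ℓ(α₀)) + m > m. -/

import Mathlib

/-- The conditional risk `C_η(α) = η ℓ(α) + (1 − η) ℓ(−α)`. -/
noncomputable def Crisk (ℓ : ℝ → ℝ) (η α : ℝ) : ℝ := η * ℓ α + (1 - η) * ℓ (-α)

/-!
Flipping the sign of the margin changes the risk by `C_η(α) − C_η(−α) = (2η − 1)(ℓ(α) − ℓ(−α))`.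
For `α ≤ −α₀` monotonicity gives `ℓ(α) − ℓ(−α) ≥ ℓ(−α₀) − ℓ(α₀) ≥ ℓ(0) − ℓ(α₀)`, and
`C_η(−α) ≥ m`, so every such risk exceeds `m` by at least `(2η − 1)(ℓ(0) − ℓ(α₀)) > 0`.
-/

lemma Crisk_sub_Crisk_neg (ℓ : ℝ → ℝ) (η α : ℝ) :
    Crisk ℓ η α - Crisk ℓ η (-α) = (2 * η - 1) * (ℓ α - ℓ (-α)) := by
  simp only [Crisk, neg_neg]
  ring

lemma bddBelow_range_Crisk {ℓ : ℝ → ℝ} (hbdd : BddBelow (Set.range ℓ)) {η : ℝ}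
    (hη₀ : 0 ≤ η) (hη₁ : η ≤ 1) : BddBelow (Set.range (Crisk ℓ η)) := by
  obtain ⟨b, hb⟩ := hbdd
  refine ⟨b, ?_⟩
  rintro _ ⟨α, rfl⟩
  have hα : b ≤ ℓ α := hb ⟨α, rfl⟩
  have hnegα : b ≤ ℓ (-α) := hb ⟨-α, rfl⟩
  calc b = η * b + (1 - η) * b := by ring
    _ ≤ Crisk ℓ η α := by unfold Crisk; gcongr

lemma Antitone.sub_le_sub_neg {ℓ : ℝ → ℝ} (hanti : Antitone ℓ) {a α : ℝ} (hα : α ≤ -a) :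
    ℓ (-a) - ℓ a ≤ ℓ α - ℓ (-α) := by
  have h₁ : ℓ (-a) ≤ ℓ α := hanti hα
  have h₂ : ℓ (-α) ≤ ℓ a := hanti (le_neg_of_le_neg hα)
  linarith

lemma add_sInf_range_Crisk_le {ℓ : ℝ → ℝ} (hanti : Antitone ℓ) (hbdd : BddBelow (Set.range ℓ))
    {η : ℝ} (hη : 1 / 2 ≤ η) (hη₁ : η ≤ 1) {a α : ℝ} (hα : α ≤ -a) :
    (2 * η - 1) * (ℓ (-a) - ℓ a) + sInf (Set.range (Crisk ℓ η)) ≤ Crisk ℓ η α := by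
  have hm : sInf (Set.range (Crisk ℓ η)) ≤ Crisk ℓ η (-α) :=
    csInf_le (bddBelow_range_Crisk hbdd (by linarith) hη₁) ⟨-α, rfl⟩
  have hgap : (2 * η - 1) * (ℓ (-a) - ℓ a) ≤ (2 * η - 1) * (ℓ α - ℓ (-α)) :=
    mul_le_mul_of_nonneg_left (hanti.sub_le_sub_neg hα) (by linarith)
  linarith [Crisk_sub_Crisk_neg ℓ η α]

/-- For `η > 1/2` and a decreasing loss `ℓ` bounded below with `m = inf_α C_η(α)`:
if `α₀ > 0` satisfies `ℓ(α₀) < ℓ(0)`, then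
`inf { C_η(α) : α ≤ −α₀ } ≥ (2η − 1)(ℓ(0) − ℓ(α₀)) + m > m`. -/
theorem stmt12 (ℓ : ℝ → ℝ) (hanti : Antitone ℓ) (hbdd : BddBelow (Set.range ℓ))
    (η : ℝ) (hη : 1 / 2 < η) (hη1 : η ≤ 1)
    (m : ℝ) (hm : m = sInf (Set.range fun α => Crisk ℓ η α))
    (α₀ : ℝ) (hα₀ : 0 < α₀) (hdrop : ℓ α₀ < ℓ 0) :
    (2 * η - 1) * (ℓ 0 - ℓ α₀) + m ≤ sInf {v | ∃ α : ℝ, α ≤ -α₀ ∧ v = Crisk ℓ η α} ∧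
    m < sInf {v | ∃ α : ℝ, α ≤ -α₀ ∧ v = Crisk ℓ η α} := by
  subst hm
  have hgap_pos : 0 < (2 * η - 1) * (ℓ 0 - ℓ α₀) := mul_pos (by linarith) (by linarith)
  have hbound : (2 * η - 1) * (ℓ 0 - ℓ α₀) + sInf (Set.range (Crisk ℓ η)) ≤
      sInf {v | ∃ α : ℝ, α ≤ -α₀ ∧ v = Crisk ℓ η α} := by
    refine le_csInf ⟨_, -α₀, le_rfl, rfl⟩ ?_
    rintro _ ⟨α, hα, rfl⟩
    have hℓ : ℓ 0 ≤ ℓ (-α₀) := hanti (by linarith)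
    have hη' : 0 ≤ 2 * η - 1 := by linarith
    calc (2 * η - 1) * (ℓ 0 - ℓ α₀) + sInf (Set.range (Crisk ℓ η))
        ≤ (2 * η - 1) * (ℓ (-α₀) - ℓ α₀) + sInf (Set.range (Crisk ℓ η)) := by gcongr
      _ ≤ Crisk ℓ η α := add_sInf_range_Crisk_le hanti hbdd hη.le hη1 hα
  exact ⟨hbound, by linarith⟩
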